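/- Let M be a nonzero real d×e matrix, and let x, y be independent d-dimensional random vectors with i.i.d. standard normal coordinates. Then the Pearson correlation coefficient between ⟨x,y⟩ and xᵀ (M Mᵀ) y is strictly positive. -/

import Mathlib

/-!
Write `x = Z (0, ·)`, `y = Z (1, ·)` and `Q_B = xᵀ B y`. By independence,
`E[x_i y_j x_k y_l] = δ_ik δ_jl`, so the products `x_i y_j` form an orthonormal family of
mean-zero variables in `L²`. Hence `E[Q_B] = 0` and `E[Q_B Q_C] = tr (B Cᵀ)`, the Frobenius inner
product. With `B = 1` and `C = A = M Mᵀ` the correlation is `tr A / √(d · tr (A Aᵀ))`, and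
`tr A = tr (M Mᵀ) > 0` because `M ≠ 0`.
-/

open MeasureTheory ProbabilityTheory
open scoped Matrix

namespace Matrix

lemma trace_mul_transpose_self_pos {m n : Type*} [Fintype m] [Fintype n] {A : Matrix m n ℝ}
    (hA : A ≠ 0) : 0 < (A * Aᵀ).trace := by
  rw [← conjTranspose_eq_transpose_of_trivial]
  exact (posSemidef_self_mul_conjTranspose A).trace_nonneg.lt_of_ne'
    (trace_mul_conjTranspose_self_eq_zero_iff.not.mpr hA)

end Matrix

section Orthonormal

variable {Ω τ : Type*} [MeasurableSpace Ω] {μ : Measure Ω} [Fintype τ] {W : τ → Ω → ℝ}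

lemma integral_sum_mul_sum_of_orthonormal [DecidableEq τ]
    (hint : ∀ p q, Integrable (fun ω => W p ω * W q ω) μ)
    (horth : ∀ p q, ∫ ω, W p ω * W q ω ∂μ = if p = q then 1 else 0) (b c : τ → ℝ) :
    ∫ ω, (∑ p, b p * W p ω) * (∑ q, c q * W q ω) ∂μ = ∑ p, b p * c p := by
  have hexpand : ∀ ω, (∑ p, b p * W p ω) * (∑ q, c q * W q ω)
      = ∑ p, ∑ q, b p * c q * (W p ω * W q ω) := fun ω => by
    rw [Finset.sum_mul_sum]; congr! 2 with p _ q _; ring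
  simp_rw [hexpand]
  rw [integral_finsetSum _ fun p _ => integrable_finsetSum _ fun q _ => (hint p q).const_mul _]
  simp_rw [integral_finsetSum _ fun q _ => (hint _ q).const_mul _, integral_const_mul, horth]
  simp

end Orthonormal

structure IsIndepStandardFamily {Ω κ : Type*} [MeasurableSpace Ω] (X : κ → Ω → ℝ)
    (μ : Measure Ω) : Prop where
  iIndepFun : iIndepFun X μ
  memLp : ∀ i, MemLp (X i) 2 μ
  integral_eq_zero : ∀ i, μ[X i] = 0
  variance_eq_one : ∀ i, Var[X i; μ] = 1

namespace IsIndepStandardFamily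

variable {Ω κ : Type*} [MeasurableSpace Ω] {μ : Measure Ω} {X : κ → Ω → ℝ}

lemma integrable_mul (hX : IsIndepStandardFamily X μ) (i j : κ) :
    Integrable (fun ω => X i ω * X j ω) μ :=
  (hX.memLp i).integrable_mul (hX.memLp j)

lemma integral_mul_self [IsProbabilityMeasure μ] (hX : IsIndepStandardFamily X μ) (i : κ) :
    ∫ ω, X i ω * X i ω ∂μ = 1 := by
  have h := variance_eq_sub (hX.memLp i)
  rw [hX.variance_eq_one, hX.integral_eq_zero] at h
  simpa [sq] using h.symm

lemma integral_mul [IsProbabilityMeasure μ] [DecidableEq κ] (hX : IsIndepStandardFamily X μ)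
    (i j : κ) :
    ∫ ω, X i ω * X j ω ∂μ = if i = j then 1 else 0 := by
  split_ifs with hij
  · subst hij; exact hX.integral_mul_self i
  · rw [(hX.iIndepFun.indepFun hij).integral_fun_mul_eq_mul_integral
      (hX.memLp i).aestronglyMeasurable (hX.memLp j).aestronglyMeasurable,
      hX.integral_eq_zero, zero_mul]

lemma indepFun_mul_mul (hX : IsIndepStandardFamily X μ) {a b c f : κ} (hac : a ≠ c) (haf : a ≠ f)
    (hbc : b ≠ c) (hbf : b ≠ f) : IndepFun (X a * X b) (X c * X f) μ :=
  hX.iIndepFun.indepFun_mul_mul₀ (fun i => (hX.memLp i).aestronglyMeasurable.aemeasurable)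
    a b c f hac haf hbc hbf

lemma integrable_mul_mul_mul_of_ne (hX : IsIndepStandardFamily X μ) {a b c f : κ} (hac : a ≠ c)
    (haf : a ≠ f) (hbc : b ≠ c) (hbf : b ≠ f) :
    Integrable (fun ω => (X a ω * X b ω) * (X c ω * X f ω)) μ :=
  (hX.indepFun_mul_mul hac haf hbc hbf).integrable_mul (hX.integrable_mul a b)
    (hX.integrable_mul c f)

lemma integral_mul_mul_mul_of_ne [IsProbabilityMeasure μ] [DecidableEq κ]
    (hX : IsIndepStandardFamily X μ) {a b c f : κ}
    (hac : a ≠ c) (haf : a ≠ f) (hbc : b ≠ c) (hbf : b ≠ f) :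
    ∫ ω, (X a ω * X b ω) * (X c ω * X f ω) ∂μ
      = (if a = b then 1 else 0) * (if c = f then 1 else 0) :=
  (hX.indepFun_mul_mul hac haf hbc hbf).integral_mul_eq_mul_integral
    (hX.integrable_mul a b).aestronglyMeasurable (hX.integrable_mul c f).aestronglyMeasurable
  |>.trans (congr_arg₂ _ (hX.integral_mul a b) (hX.integral_mul c f))

end IsIndepStandardFamily

section RandomBilinForm

variable {Ω ι : Type*}

def randomBilinForm [Fintype ι] (Z : Fin 2 × ι → Ω → ℝ) (B : Matrix ι ι ℝ) (ω : Ω) : ℝ :=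
  ∑ i, ∑ j, Z (0, i) ω * B i j * Z (1, j) ω

lemma randomBilinForm_eq_sum [Fintype ι] (Z : Fin 2 × ι → Ω → ℝ) (B : Matrix ι ι ℝ) (ω : Ω) :
    randomBilinForm Z B ω = ∑ p : ι × ι, B p.1 p.2 * (Z (0, p.1) ω * Z (1, p.2) ω) := by
  rw [randomBilinForm, Fintype.sum_prod_type]
  congr! 2 with i _ j _
  ring

lemma randomBilinForm_one_apply [Fintype ι] [DecidableEq ι] (Z : Fin 2 × ι → Ω → ℝ) (ω : Ω) :
    randomBilinForm Z 1 ω = ∑ i, Z (0, i) ω * Z (1, i) ω := by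
  simp [randomBilinForm, Matrix.one_apply]

namespace IsIndepStandardFamily

variable [MeasurableSpace Ω] {μ : Measure Ω} {Z : Fin 2 × ι → Ω → ℝ}

lemma integrable_cross_mul_cross (hZ : IsIndepStandardFamily Z μ) (p q : ι × ι) :
    Integrable (fun ω => (Z (0, p.1) ω * Z (1, p.2) ω) * (Z (0, q.1) ω * Z (1, q.2) ω)) μ := by
  have h := hZ.integrable_mul_mul_mul_of_ne (a := (0, p.1)) (b := (0, q.1)) (c := (1, p.2))
    (f := (1, q.2)) (by simp) (by simp) (by simp) (by simp)
  convert h using 2 with ω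
  ring

lemma integral_cross_mul_cross [IsProbabilityMeasure μ] [DecidableEq ι]
    (hZ : IsIndepStandardFamily Z μ) (p q : ι × ι) :
    ∫ ω, (Z (0, p.1) ω * Z (1, p.2) ω) * (Z (0, q.1) ω * Z (1, q.2) ω) ∂μ
      = if p = q then 1 else 0 := by
  have h := hZ.integral_mul_mul_mul_of_ne (a := (0, p.1)) (b := (0, q.1)) (c := (1, p.2))
    (f := (1, q.2)) (by simp) (by simp) (by simp) (by simp)
  calc _ = ∫ ω, (Z (0, p.1) ω * Z (0, q.1) ω) * (Z (1, p.2) ω * Z (1, q.2) ω) ∂μ := by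
        congr! 2 with ω; ring
    _ = _ := by rw [h]; split_ifs <;> simp_all [Prod.ext_iff]

variable [Fintype ι]

lemma integral_randomBilinForm [IsProbabilityMeasure μ] (hZ : IsIndepStandardFamily Z μ)
    (B : Matrix ι ι ℝ) : μ[randomBilinForm Z B] = 0 := by
  have hcross : ∀ p : ι × ι, ∫ ω, Z (0, p.1) ω * Z (1, p.2) ω ∂μ = 0 := fun p => by
    classical
    simpa using hZ.integral_mul (0, p.1) (1, p.2)
  simp_rw [randomBilinForm_eq_sum]
  rw [integral_finsetSum _ fun p _ => (hZ.integrable_mul _ _).const_mul _]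
  simp [integral_const_mul, hcross]

lemma integral_randomBilinForm_mul [IsProbabilityMeasure μ] (hZ : IsIndepStandardFamily Z μ)
    (B C : Matrix ι ι ℝ) :
    ∫ ω, randomBilinForm Z B ω * randomBilinForm Z C ω ∂μ = (B * Cᵀ).trace := by
  classical
  simp_rw [randomBilinForm_eq_sum]
  rw [integral_sum_mul_sum_of_orthonormal hZ.integrable_cross_mul_cross
    hZ.integral_cross_mul_cross]
  simp [Matrix.trace, Matrix.mul_apply, Fintype.sum_prod_type]

lemma memLp_randomBilinForm (hZ : IsIndepStandardFamily Z μ) (B : Matrix ι ι ℝ) :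
    MemLp (randomBilinForm Z B) 2 μ := by
  have hcross : ∀ p : ι × ι, MemLp (fun ω => Z (0, p.1) ω * Z (1, p.2) ω) 2 μ := fun p =>
    (memLp_two_iff_integrable_sq (hZ.integrable_mul _ _).aestronglyMeasurable).mpr <| by
      simpa only [sq] using hZ.integrable_cross_mul_cross p p
  simp_rw [funext (randomBilinForm_eq_sum Z B)]
  exact memLp_finsetSum _ fun p _ => (hcross p).const_mul _

lemma variance_randomBilinForm [IsProbabilityMeasure μ] (hZ : IsIndepStandardFamily Z μ)
    (B : Matrix ι ι ℝ) : Var[randomBilinForm Z B; μ] = (B * Bᵀ).trace := by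
  rw [variance_eq_sub (hZ.memLp_randomBilinForm B), hZ.integral_randomBilinForm,
    ← hZ.integral_randomBilinForm_mul]
  simp [sq]

end IsIndepStandardFamily

end RandomBilinForm

lemma isIndepStandardFamily_of_map_eq_gaussianReal {Ω κ : Type*} [MeasurableSpace Ω]
    {μ : Measure Ω} {X : κ → Ω → ℝ} (hmeas : ∀ i, Measurable (X i)) (hindep : iIndepFun X μ)
    (hgauss : ∀ i, μ.map (X i) = gaussianReal 0 1) : IsIndepStandardFamily X μ where
  iIndepFun := hindep
  memLp i := (memLp_map_measure_iff aestronglyMeasurable_id (hmeas i).aemeasurable).mp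
    (hgauss i ▸ memLp_id_gaussianReal 2)
  integral_eq_zero i := by
    rw [HasLaw.integral_eq ⟨(hmeas i).aemeasurable, hgauss i⟩, integral_id_gaussianReal]
  variance_eq_one i := by
    rw [HasLaw.variance_eq ⟨(hmeas i).aemeasurable, hgauss i⟩, variance_id_gaussianReal]
    rfl

/-- Theorem 1 of the paper: for a nonzero matrix M and independent d-dimensional
random vectors x, y with i.i.d. standard normal coordinates (x_φ = Z (0,φ),
y_φ = Z (1,φ)), the Pearson correlation coefficient between ⟨x,y⟩ and xᵀ (M Mᵀ) y
is strictly positive. -/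
theorem pearson_corr_pos_of_nonzero_matrix
    {Ω : Type*} [MeasurableSpace Ω] (μ : Measure Ω) [IsProbabilityMeasure μ]
    (d e : ℕ) (Z : Fin 2 × Fin d → Ω → ℝ) (M : Matrix (Fin d) (Fin e) ℝ)
    (hM : M ≠ 0)
    (hmeas : ∀ i, Measurable (Z i))
    (hindep : iIndepFun Z μ)
    (hgauss : ∀ i, μ.map (Z i) = gaussianReal 0 1) :
    0 < ((∫ ω, (∑ φ : Fin d, Z (0, φ) ω * Z (1, φ) ω)
            * (∑ ν : Fin d, ∑ ν' : Fin d,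
                Z (0, ν) ω * (M * M.transpose) ν ν' * Z (1, ν') ω) ∂μ)
          - (∫ ω, ∑ φ : Fin d, Z (0, φ) ω * Z (1, φ) ω ∂μ)
            * (∫ ω, ∑ ν : Fin d, ∑ ν' : Fin d,
                Z (0, ν) ω * (M * M.transpose) ν ν' * Z (1, ν') ω ∂μ))
        / Real.sqrt
            (variance (fun ω => ∑ φ : Fin d, Z (0, φ) ω * Z (1, φ) ω) μ
              * variance (fun ω => ∑ ν : Fin d, ∑ ν' : Fin d,
                  Z (0, ν) ω * (M * M.transpose) ν ν' * Z (1, ν') ω) μ) := by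
  have hZ := isIndepStandardFamily_of_map_eq_gaussianReal hmeas hindep hgauss
  have : NeZero d := ⟨by rintro rfl; exact hM (Subsingleton.elim _ _)⟩
  have htrace : 0 < (M * M.transpose).trace := Matrix.trace_mul_transpose_self_pos hM
  have hMMt : M * M.transpose ≠ 0 := fun h => by simp [h] at htrace
  simp only [← randomBilinForm_one_apply, ← randomBilinForm.eq_1]
  rw [hZ.integral_randomBilinForm_mul, hZ.integral_randomBilinForm, zero_mul, sub_zero, one_mul,
    Matrix.trace_transpose, hZ.variance_randomBilinForm, hZ.variance_randomBilinForm]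
  exact div_pos htrace <| Real.sqrt_pos.mpr <| mul_pos
    (Matrix.trace_mul_transpose_self_pos one_ne_zero) (Matrix.trace_mul_transpose_self_pos hMMt)
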